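/- For every LC-NSB evacuation run on an initial loopless multigraph G(0) on n ≥ 2 vertices, the evacuation time T is finite and satisfies 2·T ≤ 3·X′, where X′ is the minimum evacuation time of G(0); moreover, if the support of G(0) is bipartite, then T = Δ(0) = X′, where Δ(0) is the maximum degree of G(0). That is, the LC-NSB algorithm has an approximation ratio no greater than 3/2 for the evacuation time and is evacuation-time-optimal in bipartite graphs. -/

import Mathlib

/-!
Vertices of degree at least `(n - 1)Δ / n` satisfy Hall's condition, so a set of them on which the
support is bipartite is saturated by some matching; an augmenting-path exchange then shows that a
maximum-weight matching serves every vertex of that set whose weight exceeds every weight outside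
it.

In slot `3m + 1` the critical vertices missed in slot `3m`, and in slot `3m + 2` those missed in
slot `3m` or `3m + 1`, span a bipartite part of the support, because a maximum-weight matching is
maximal. Their weight 5 beats the weight at most 4 of all other vertices, so they are served, and
every three slots lower `Δ` by two: `2T ≤ 3Δ(0) ≤ 3X′`. When the support is bipartite, heavy
vertices weigh at least 2 against 1 for the others, so `Δ` drops in every slot: `T ≤ Δ(0) ≤ X′`.
-/

open scoped Classical

namespace NSBPaper

variable {V : Type} [Fintype V] [DecidableEq V]

/-- Degree of a vertex in a loopless multigraph given by multiplicity function `w`. -/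
def deg (w : V → V → ℕ) (v : V) : ℕ := ∑ u, w v u

/-- Maximum degree of the multigraph. -/
def maxDeg (w : V → V → ℕ) : ℕ := Finset.univ.sup fun v => deg w v

/-- The support simple graph of a multigraph: `u` and `v` are adjacent iff `u ≠ v`
and there is at least one multi-edge between them. -/
def support (w : V → V → ℕ) : SimpleGraph V where
  Adj u v := u ≠ v ∧ 1 ≤ w u v ∧ 1 ≤ w v u
  symm := ⟨fun u v h => ⟨h.1.symm, h.2.2, h.2.1⟩⟩
  loopless := ⟨fun v h => h.1 rfl⟩

/-- A set of unordered pairs `M` saturates a vertex `v` if some pair of `M` contains `v`. -/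
def Saturates (M : Finset (Sym2 V)) (v : V) : Prop := ∃ e ∈ M, v ∈ e

/-- `M` is a matching of the multigraph `w`: its elements are non-loop edges of the
support, and no two distinct elements share a vertex. -/
def IsMatching (w : V → V → ℕ) (M : Finset (Sym2 V)) : Prop :=
  (∀ e ∈ M, ¬ e.IsDiag) ∧
  (∀ u v : V, s(u, v) ∈ M → 1 ≤ w u v) ∧
  (∀ e ∈ M, ∀ f ∈ M, e ≠ f → ∀ x : V, x ∈ e → x ∉ f)

/-- `M` is a maximal matching of `w`: no pair can be added keeping it a matching. -/
def IsMaximalMatching (w : V → V → ℕ) (M : Finset (Sym2 V)) : Prop :=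
  IsMatching w M ∧ ∀ e : Sym2 V, e ∉ M → ¬ IsMatching w (insert e M)

/-- Removing a matching `M` from the multigraph `w`: the multiplicity of each pair in `M`
decreases by one. -/
def removeMatching (w : V → V → ℕ) (M : Finset (Sym2 V)) : V → V → ℕ :=
  fun u v => if s(u, v) ∈ M then w u v - 1 else w u v

/-- The subgraph of `G` induced by `Z` is bipartite: there is a set `A` such that every
edge of `G` inside `Z` joins `A` to its complement. -/
def BipartiteOn (G : SimpleGraph V) (Z : Set V) : Prop :=
  ∃ A : Set V, ∀ ⦃u v : V⦄, u ∈ Z → v ∈ Z → G.Adj u v → (u ∈ A ↔ v ∉ A)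

/-- The edge multiset of `w` can be partitioned into `T` matchings. -/
def CanEvacuate (w : V → V → ℕ) (T : ℕ) : Prop :=
  ∃ M : Fin T → Finset (Sym2 V),
    (∀ j, IsMatching w (M j)) ∧
    ∀ u v : V, (Finset.univ.filter fun j => s(u, v) ∈ M j).card = w u v

/-- The vertex-weight of a matching: the sum of the weights of its saturated vertices. -/
noncomputable def matchWeight (φ : V → ℕ) (M : Finset (Sym2 V)) : ℕ :=
  ∑ v : V, if Saturates M v then φ v else 0

/-- `Rfun M k i = 1` iff vertex `i` is saturated by the matching chosen in slot `k`. -/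
noncomputable def Rfun (M : ℕ → Finset (Sym2 V)) (k : ℕ) (i : V) : ℕ :=
  if Saturates (M k) i then 1 else 0

/-- `Ufun M k i` is `R i (k-1) * R i (k-2)` if `k ≡ 2 [MOD 3]` and `R i (k-1)` otherwise,
with `R i k = 0` for `k < 0`. -/
noncomputable def Ufun (M : ℕ → Finset (Sym2 V)) (k : ℕ) (i : V) : ℕ :=
  if k = 0 then 0
  else if k % 3 = 2 then Rfun M (k - 1) i * Rfun M (k - 2) i
  else Rfun M (k - 1) i

/-- Vertex `i` is heavy in `w`: `n * d(i) ≥ (n - 1) * Δ`. -/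
def Heavy (w : V → V → ℕ) (i : V) : Prop :=
  (Fintype.card V - 1) * maxDeg w ≤ Fintype.card V * deg w i

/-- Vertex `i` is critical in `w`: its degree is the maximum degree. -/
def Critical (w : V → V → ℕ) (i : V) : Prop := deg w i = maxDeg w

/-- The NSB weight of vertex `i`, where `u i` records whether `i` received enough
service previously. -/
noncomputable def nsbWeight (w : V → V → ℕ) (u : V → ℕ) (i : V) : ℕ :=
  if Heavy w i then deg w i * (2 - u i) else deg w i

/-- The LC-NSB weight of vertex `i`. -/
noncomputable def lcnsbWeight (w : V → V → ℕ) (u : V → ℕ) (i : V) : ℕ :=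
  if Critical w i then 5 - 2 * u i
  else if Heavy w i then 4 - 2 * u i
  else 1

/-- An NSB evacuation run on the initial multigraph `w0`: in each slot `k`, a matching
`M k` of `G k` maximizing the total NSB weight of saturated vertices is removed. -/
structure NSBRun (w0 : V → V → ℕ) where
  G : ℕ → V → V → ℕ
  M : ℕ → Finset (Sym2 V)
  init : G 0 = w0
  step : ∀ k, G (k + 1) = removeMatching (G k) (M k)
  matching : ∀ k, IsMatching (G k) (M k)
  opt : ∀ k, ∀ M' : Finset (Sym2 V), IsMatching (G k) M' →
    matchWeight (nsbWeight (G k) (Ufun M k)) M' ≤ matchWeight (nsbWeight (G k) (Ufun M k)) (M k)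

/-- An LC-NSB evacuation run on the initial multigraph `w0`. -/
structure LCNSBRun (w0 : V → V → ℕ) where
  G : ℕ → V → V → ℕ
  M : ℕ → Finset (Sym2 V)
  init : G 0 = w0
  step : ∀ k, G (k + 1) = removeMatching (G k) (M k)
  matching : ∀ k, IsMatching (G k) (M k)
  opt : ∀ k, ∀ M' : Finset (Sym2 V), IsMatching (G k) M' →
    matchWeight (lcnsbWeight (G k) (Ufun M k)) M' ≤
      matchWeight (lcnsbWeight (G k) (Ufun M k)) (M k)

end NSBPaper

namespace NSBPaper

section Matching

variable {V : Type} {w : V → V → ℕ} {M N : Finset (Sym2 V)}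

lemma support_adj_iff (hsymm : ∀ u v, w u v = w v u) (hloop : ∀ v, w v v = 0) {u v : V} :
    (support w).Adj u v ↔ 0 < w u v := by
  refine ⟨fun h => h.2.1, fun h => ⟨?_, h, hsymm u v ▸ h⟩⟩
  rintro rfl
  simp [hloop] at h

lemma BipartiteOn.mono {G H : SimpleGraph V} {Y Z : Set V} (h : BipartiteOn G Z) (hHG : H ≤ G)
    (hYZ : Y ⊆ Z) : BipartiteOn H Y :=
  let ⟨A, hA⟩ := h
  ⟨A, fun _ _ hu hv huv => hA (hYZ hu) (hYZ hv) (hHG huv)⟩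

lemma Saturates.mono {v : V} (h : Saturates M v) (hMN : M ⊆ N) : Saturates N v :=
  let ⟨e, he, hv⟩ := h; ⟨e, hMN he, hv⟩

namespace IsMatching

lemma ne (hM : IsMatching w M) {u v : V} (h : s(u, v) ∈ M) : u ≠ v := by
  rintro rfl
  exact hM.1 _ h (Sym2.mk_isDiag_iff.2 rfl)

lemma adj (hM : IsMatching w M) {u v : V} (h : s(u, v) ∈ M) : (support w).Adj u v :=
  ⟨hM.ne h, hM.2.1 u v h, hM.2.1 v u (Sym2.eq_swap ▸ h)⟩

lemma eq_of_mem (hM : IsMatching w M) {e f : Sym2 V} (he : e ∈ M) (hf : f ∈ M) {x : V}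
    (hxe : x ∈ e) (hxf : x ∈ f) : e = f := by
  by_contra hne
  exact hM.2.2 e he f hf hne x hxe hxf

lemma eq_of_mk_mem (hM : IsMatching w M) {v a b : V} (ha : s(v, a) ∈ M)
    (hb : s(v, b) ∈ M) : a = b := by
  have := hM.eq_of_mem ha hb (Sym2.mem_mk_left v a) (Sym2.mem_mk_left v b)
  aesop

lemma subset (hM : IsMatching w M) (hNM : N ⊆ M) : IsMatching w N :=
  ⟨fun e he => hM.1 e (hNM he), fun u v h => hM.2.1 u v (hNM h),
    fun e he f hf => hM.2.2 e (hNM he) f (hNM hf)⟩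

end IsMatching

variable [DecidableEq V]

lemma saturates_insert {e : Sym2 V} {v : V} :
    Saturates (insert e M) v ↔ v ∈ e ∨ Saturates M v := by
  simp [Saturates]

namespace IsMatching

lemma insert_adj (hM : IsMatching w M) {i j : V} (hij : (support w).Adj i j)
    (hi : ¬ Saturates M i) (hj : ¬ Saturates M j) : IsMatching w (insert s(i, j) M) := by
  refine ⟨?_, ?_, ?_⟩
  · simp only [Finset.mem_insert, forall_eq_or_imp, Sym2.mk_isDiag_iff]
    exact ⟨hij.1, hM.1⟩
  · intro u v huv
    rcases Finset.mem_insert.1 huv with h | h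
    · rcases Sym2.eq_iff.1 h with ⟨rfl, rfl⟩ | ⟨rfl, rfl⟩
      exacts [hij.2.1, hij.2.2]
    · exact hM.2.1 u v h
  · have hfree : ∀ f ∈ M, ∀ x ∈ s(i, j), x ∉ f := by
      rintro f hf x hx hxf
      rcases Sym2.mem_iff.1 hx with rfl | rfl
      exacts [hi ⟨f, hf, hxf⟩, hj ⟨f, hf, hxf⟩]
    intro e he f hf hne x hxe hxf
    rcases Finset.mem_insert.1 he with rfl | he <;> rcases Finset.mem_insert.1 hf with rfl | hf
    · exact hne rfl
    · exact hfree f hf x hxe hxf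
    · exact hfree e he x hxf hxe
    · exact hM.2.2 e he f hf hne x hxe hxf

lemma not_saturates_erase (hM : IsMatching w M) {e : Sym2 V} (he : e ∈ M) {x : V}
    (hx : x ∈ e) : ¬ Saturates (M.erase e) x := by
  rintro ⟨f, hf, hxf⟩
  exact Finset.ne_of_mem_erase hf (hM.eq_of_mem (Finset.mem_of_mem_erase hf) he hxf hx)

end IsMatching

variable [Fintype V]

lemma matchWeight_insert (φ : V → ℕ) {i j : V} (hij : i ≠ j)
    (hi : ¬ Saturates M i) (hj : ¬ Saturates M j) :
    matchWeight φ (insert s(i, j) M) = matchWeight φ M + φ i + φ j := by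
  have hsat : Finset.univ.filter (Saturates (insert s(i, j) M)) =
      insert i (insert j (Finset.univ.filter (Saturates M))) := by
    ext v
    simp [saturates_insert, or_assoc]
  simp only [matchWeight, ← Finset.sum_filter, hsat]
  rw [Finset.sum_insert (by simp [hij, hi]), Finset.sum_insert (by simp [hj])]
  ring

lemma IsMatching.matchWeight_erase (hM : IsMatching w M) (φ : V → ℕ) {j p : V}
    (h : s(j, p) ∈ M) : matchWeight φ (M.erase s(j, p)) + φ j + φ p = matchWeight φ M := by
  rw [← matchWeight_insert φ (hM.ne h) (hM.not_saturates_erase h (Sym2.mem_mk_left j p))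
    (hM.not_saturates_erase h (Sym2.mem_mk_right j p)), Finset.insert_erase h]

end Matching

section MaxWeight

variable {V : Type} [Fintype V] [DecidableEq V] {w : V → V → ℕ} {M N : Finset (Sym2 V)}

/-- Augment along the alternating path from `i`: replacing the `M`-edge `jp` by the `N`-edge
`ij` trades the weight of `p` for that of `i`, and `p` takes the role of `i` until it lies
outside `X`. -/
lemma IsMatching.exists_exchange (hM : IsMatching w M) {φ : V → ℕ} {X : Finset V} {c : ℕ}
    (hc : ∀ v ∉ X, φ v ≤ c) (hN : IsMatching w N) (hNX : ∀ x ∈ X, Saturates N x)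
    {i : V} (hiX : i ∈ X) (hi : ¬ Saturates M i) :
    ∃ M', IsMatching w M' ∧ matchWeight φ M + φ i ≤ matchWeight φ M' + c := by
  induction hcard : (M \ N).card using Nat.strong_induction_on generalizing M i with
  | _ n ih =>
  obtain ⟨e, heN, hie⟩ := hNX i hiX
  obtain ⟨j, rfl⟩ := Sym2.mem_iff_exists.1 hie
  have hij := hN.adj heN
  by_cases hj : Saturates M j
  swap
  · refine ⟨_, hM.insert_adj hij hi hj, ?_⟩
    rw [matchWeight_insert φ hij.1 hi hj]
    linarith
  obtain ⟨f, hfM, hjf⟩ := hj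
  obtain ⟨p, rfl⟩ := Sym2.mem_iff_exists.1 hjf
  have hip : i ≠ p := by
    rintro rfl
    exact hi ⟨_, hfM, Sym2.mem_mk_right j i⟩
  have hjp : j ≠ p := hM.ne hfM
  have hi' : ¬ Saturates (M.erase s(j, p)) i := fun h => hi (h.mono (Finset.erase_subset _ _))
  have hj' := hM.not_saturates_erase hfM (Sym2.mem_mk_left j p)
  set M₂ := insert s(i, j) (M.erase s(j, p))
  have hM₂ : IsMatching w M₂ := (hM.subset (Finset.erase_subset _ _)).insert_adj hij hi' hj'
  have hweight : matchWeight φ M₂ + φ p = matchWeight φ M + φ i := by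
    rw [← hM.matchWeight_erase φ hfM, matchWeight_insert φ hij.1 hi' hj']
    ring
  by_cases hpX : p ∉ X
  · exact ⟨M₂, hM₂, by linarith [hc p hpX]⟩
  push Not at hpX
  have hp : ¬ Saturates M₂ p := by
    rw [saturates_insert, not_or, Sym2.mem_iff, not_or]
    exact ⟨⟨hip.symm, hjp.symm⟩, hM.not_saturates_erase hfM (Sym2.mem_mk_right j p)⟩
  have hjpN : s(j, p) ∉ N := fun h => by
    rcases Sym2.eq_iff.1 (hN.eq_of_mem heN h (Sym2.mem_mk_right i j) (Sym2.mem_mk_left j p))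
      with ⟨-, h⟩ | ⟨h, -⟩
    exacts [hjp h, hip h]
  have hlt : (M₂ \ N).card < n := by
    rw [Finset.insert_sdiff_of_mem _ heN, Finset.erase_sdiff_comm, ← hcard]
    exact Finset.card_erase_lt_of_mem (Finset.mem_sdiff.2 ⟨hfM, hjpN⟩)
  obtain ⟨M₃, hM₃, h₃⟩ := ih _ hlt hM₂ hpX hp rfl
  exact ⟨M₃, hM₃, by linarith⟩

def IsMaxWeightMatching (w : V → V → ℕ) (φ : V → ℕ) (M : Finset (Sym2 V)) : Prop :=
  IsMatching w M ∧ ∀ M', IsMatching w M' → matchWeight φ M' ≤ matchWeight φ M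

namespace IsMaxWeightMatching

variable {φ : V → ℕ}

lemma saturates_of_lt (hM : IsMaxWeightMatching w φ M) {X : Finset V} {c : ℕ}
    (hc : ∀ v ∉ X, φ v ≤ c) (hN : IsMatching w N) (hNX : ∀ x ∈ X, Saturates N x) {i : V}
    (hiX : i ∈ X) (hic : c < φ i) : Saturates M i := by
  by_contra hi
  obtain ⟨M', hM', h⟩ := hM.1.exists_exchange hc hN hNX hiX hi
  linarith [hM.2 M' hM']

lemma saturates_or_saturates (hM : IsMaxWeightMatching w φ M) (hφ : ∀ v, 1 ≤ φ v) {x y : V}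
    (hxy : (support w).Adj x y) : Saturates M x ∨ Saturates M y := by
  by_contra! h
  have := hM.2 _ (hM.1.insert_adj hxy h.1 h.2)
  rw [matchWeight_insert φ hxy.1 h.1 h.2] at this
  linarith [hφ x]

end IsMaxWeightMatching

end MaxWeight

section Degree

variable {V : Type} [Fintype V] {w : V → V → ℕ}

lemma le_deg (w : V → V → ℕ) (u v : V) : w u v ≤ deg w u :=
  Finset.single_le_sum (fun _ _ => Nat.zero_le _) (Finset.mem_univ v)

lemma add_le_deg (w : V → V → ℕ) {u v z : V} (hvz : v ≠ z) : w u v + w u z ≤ deg w u := by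
  rw [← Finset.sum_pair hvz]
  exact Finset.sum_le_sum_of_subset (Finset.subset_univ _)

lemma deg_le_maxDeg (w : V → V → ℕ) (v : V) : deg w v ≤ maxDeg w :=
  Finset.le_sup (Finset.mem_univ v)

lemma maxDeg_le {d : ℕ} (h : ∀ v, deg w v ≤ d) : maxDeg w ≤ d :=
  Finset.sup_le fun v _ => h v

lemma eq_zero_of_maxDeg_eq_zero (h : maxDeg w = 0) (u v : V) : w u v = 0 := by
  linarith [le_deg w u v, deg_le_maxDeg w u]

lemma critical_of_maxDeg_le {v : V} (h : maxDeg w ≤ deg w v) : Critical w v :=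
  le_antisymm (deg_le_maxDeg w v) h

lemma Critical.heavy {v : V} (h : Critical w v) : Heavy w v := by
  rw [Heavy, h]
  exact Nat.mul_le_mul_right _ (Nat.sub_le _ _)

lemma exists_adj_of_deg_pos (hsymm : ∀ u v, w u v = w v u) (hloop : ∀ v, w v v = 0)
    {v : V} (h : 0 < deg w v) : ∃ u, (support w).Adj v u := by
  obtain ⟨u, -, hu⟩ := Finset.sum_pos_iff.1 h
  exact ⟨u, (support_adj_iff hsymm hloop).2 hu⟩

lemma Heavy.deg_pos (hsymm : ∀ u v, w u v = w v u) (hloop : ∀ v, w v v = 0)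
    (hΔ : 0 < maxDeg w) {v : V} (h : Heavy w v) : 0 < deg w v := by
  obtain ⟨x, -, hx⟩ := Finset.lt_sup_iff.1 hΔ
  obtain ⟨y, hxy⟩ := exists_adj_of_deg_pos hsymm hloop hx
  have hcard : 1 < Fintype.card V := Fintype.one_lt_card_iff.2 ⟨x, y, hxy.1⟩
  by_contra h0
  have : (Fintype.card V - 1) * maxDeg w ≤ 0 := by
    simpa [Heavy, Nat.le_zero.1 (not_lt.1 h0)] using h
  rcases Nat.mul_eq_zero.1 (Nat.le_zero.1 this) with h1 | h1 <;> omega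

end Degree

section Saturating

variable {V : Type} [DecidableEq V] {w : V → V → ℕ}

/-- When `f` permutes `X` along edges, its cycles are even since they alternate between `A` and
its complement, and the edges `x f(x)` with `x ∈ A` form a matching saturating `X`. -/
lemma exists_matching_of_bijOn {X : Finset V} {f : V → V} (hf : Set.BijOn f X X)
    (hadj : ∀ x ∈ X, (support w).Adj x (f x)) (hbip : BipartiteOn (support w) X) :
    ∃ N, IsMatching w N ∧ (∀ v, Saturates N v → v ∈ X) ∧ ∀ x ∈ X, Saturates N x := by
  obtain ⟨A, hA⟩ := hbip
  have hfA : ∀ x ∈ X, (x ∈ A ↔ f x ∉ A) := fun x hx => hA hx (hf.mapsTo hx) (hadj x hx)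
  refine ⟨(X.filter (· ∈ A)).image fun x => s(x, f x), ⟨?_, ?_, ?_⟩, ?_, ?_⟩
  · simp only [Finset.mem_image, Finset.mem_filter]
    rintro _ ⟨x, ⟨hx, -⟩, rfl⟩
    exact fun hd => (hadj x hx).1 (Sym2.mk_isDiag_iff.1 hd)
  · simp only [Finset.mem_image, Finset.mem_filter]
    rintro u v ⟨x, ⟨hx, -⟩, he⟩
    rcases Sym2.eq_iff.1 he with ⟨rfl, rfl⟩ | ⟨rfl, rfl⟩
    exacts [(hadj x hx).2.1, (hadj x hx).2.2]
  · simp only [Finset.mem_image, Finset.mem_filter]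
    rintro _ ⟨x, ⟨hx, hxA⟩, rfl⟩ _ ⟨y, ⟨hy, hyA⟩, rfl⟩ hne z hzx hzy
    have hxy : x ≠ y := by rintro rfl; exact hne rfl
    rcases Sym2.mem_iff.1 hzx with rfl | rfl <;> rcases Sym2.mem_iff.1 hzy with h | h
    · exact hxy h
    · exact (hfA y hy).1 hyA (h ▸ hxA)
    · exact (hfA x hx).1 hxA (h ▸ hyA)
    · exact hxy (hf.injOn hx hy h)
  · simp only [Saturates, Finset.mem_image, Finset.mem_filter]
    rintro v ⟨_, ⟨x, ⟨hx, -⟩, rfl⟩, hv⟩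
    rcases Sym2.mem_iff.1 hv with rfl | rfl
    exacts [hx, hf.mapsTo hx]
  · intro x hx
    by_cases hxA : x ∈ A
    · exact ⟨_, Finset.mem_image_of_mem _ (Finset.mem_filter.2 ⟨hx, hxA⟩), Sym2.mem_mk_left _ _⟩
    obtain ⟨y, hy, rfl⟩ := hf.surjOn hx
    have hyA : y ∈ A := by simpa [hxA] using hfA y hy
    exact ⟨_, Finset.mem_image_of_mem _ (Finset.mem_filter.2 ⟨hy, hyA⟩), Sym2.mem_mk_right _ _⟩

/-- Peel off a vertex `x₀ ∉ f(X)` together with the edge `x₀ f(x₀)`; when there is none, `f`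
permutes `X`. -/
lemma exists_matching_of_injOn {f : V → V} (X : Finset V) (hf : Set.InjOn f X)
    (hadj : ∀ x ∈ X, (support w).Adj x (f x)) (hbip : BipartiteOn (support w) X) :
    ∃ N, IsMatching w N ∧ (∀ v, Saturates N v → v ∈ X ∪ X.image f) ∧
      ∀ x ∈ X, Saturates N x := by
  induction X using Finset.strongInduction with
  | H X ih =>
  by_cases hsrc : ∃ x₀ ∈ X, x₀ ∉ X.image f
  swap
  · push Not at hsrc
    have himg : X.image f = X :=
      (Finset.eq_of_subset_of_card_le (fun x hx => hsrc x hx) Finset.card_image_le).symm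
    have hmaps : Set.MapsTo f X X := fun x hx => himg ▸ Finset.mem_image_of_mem f hx
    have hsurj : Set.SurjOn f X X := fun x hx => by
      simpa using (himg.symm ▸ hx : x ∈ X.image f)
    obtain ⟨N, hN, hNX, hsat⟩ := exists_matching_of_bijOn ⟨hmaps, hf, hsurj⟩ hadj hbip
    exact ⟨N, hN, fun v hv => Finset.mem_union_left _ (hNX v hv), hsat⟩
  obtain ⟨x₀, hx₀, hx₀f⟩ := hsrc
  set X' := (X.erase x₀).erase (f x₀)
  have hX'X : X' ⊆ X := (Finset.erase_subset _ _).trans (Finset.erase_subset _ _)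
  have hx₀X' : x₀ ∉ X' := fun h => Finset.ne_of_mem_erase (Finset.mem_of_mem_erase h) rfl
  obtain ⟨N, hN, hNX', hsat⟩ := ih X' ((Finset.ssubset_iff_of_subset hX'X).2 ⟨x₀, hx₀, hx₀X'⟩)
    (hf.mono hX'X) (fun x hx => hadj x (hX'X hx)) (hbip.mono le_rfl hX'X)
  have hfree : ∀ v ∈ s(x₀, f x₀), ¬ Saturates N v := by
    intro v hv hvN
    have hv' := hNX' v hvN
    simp only [Finset.mem_union, Finset.mem_image] at hv'
    rcases Sym2.mem_iff.1 hv with rfl | rfl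
    · exact hv'.elim hx₀X' fun ⟨x, hx, hfx⟩ => hx₀f (Finset.mem_image.2 ⟨x, hX'X hx, hfx⟩)
    · refine hv'.elim (fun h => Finset.ne_of_mem_erase h rfl) fun ⟨x, hx, hfx⟩ => hx₀X' ?_
      exact hf (hX'X hx) hx₀ hfx ▸ hx
  refine ⟨insert s(x₀, f x₀) N, hN.insert_adj (hadj x₀ hx₀) (hfree _ (Sym2.mem_mk_left _ _))
    (hfree _ (Sym2.mem_mk_right _ _)), fun v hv => ?_, fun x hx => ?_⟩
  · rcases saturates_insert.1 hv with hv | hv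
    · rcases Sym2.mem_iff.1 hv with rfl | rfl
      · exact Finset.mem_union_left _ hx₀
      · exact Finset.mem_union_right _ (Finset.mem_image_of_mem f hx₀)
    · exact Finset.union_subset_union hX'X (Finset.image_subset_image hX'X) (hNX' v hv)
  · by_cases hx' : x ∈ X'
    · exact (hsat x hx').mono (Finset.subset_insert _ _)
    refine ⟨_, Finset.mem_insert_self _ _, ?_⟩
    simp only [X', Finset.mem_erase, not_and_or, not_not] at hx'
    rcases hx' with rfl | rfl | hx'
    exacts [Sym2.mem_mk_right _ _, Sym2.mem_mk_left _ _, absurd hx hx']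

variable [Fintype V]

noncomputable def nbrs (w : V → V → ℕ) (v : V) : Finset V := Finset.univ.filter ((support w).Adj v)

/-- Counting degrees, `S` sends at least `(n - 1)Δ|S| / n` edge ends into its neighbourhood `N`,
which absorbs at most `Δ` per vertex; so `(n - 1)|S| ≤ n|N|`, forcing `|S| ≤ |N|` unless `S = V`. -/
lemma card_le_card_biUnion_nbrs (hsymm : ∀ u v, w u v = w v u) (hloop : ∀ v, w v v = 0)
    (hΔ : 0 < maxDeg w) {S : Finset V} (hS : ∀ x ∈ S, Heavy w x) :
    S.card ≤ (S.biUnion (nbrs w)).card := by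
  set NS := S.biUnion (nbrs w)
  by_cases hSuniv : S = Finset.univ
  · refine Finset.card_le_card fun v hv => ?_
    obtain ⟨u, hvu⟩ := exists_adj_of_deg_pos hsymm hloop ((hS v hv).deg_pos hsymm hloop hΔ)
    exact Finset.mem_biUnion.2 ⟨u, hSuniv ▸ Finset.mem_univ u, by simpa [nbrs] using hvu.symm⟩
  have hlt : S.card < Fintype.card V :=
    Finset.card_lt_card (Finset.ssubset_univ_iff.2 hSuniv)
  have hNS : ∑ v ∈ S, deg w v ≤ NS.card * maxDeg w :=
    calc ∑ v ∈ S, deg w v = ∑ v ∈ S, ∑ u ∈ NS, w v u := by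
          refine Finset.sum_congr rfl fun v hv => (Finset.sum_subset (Finset.subset_univ NS)
            fun u _ hu => ?_).symm
          by_contra h
          exact hu (Finset.mem_biUnion.2 ⟨v, hv, by
            simpa [nbrs] using (support_adj_iff hsymm hloop).2 (Nat.pos_of_ne_zero h)⟩)
      _ = ∑ u ∈ NS, ∑ v ∈ S, w u v := by
          rw [Finset.sum_comm]
          exact Finset.sum_congr rfl fun u _ => Finset.sum_congr rfl fun v _ => hsymm v u
      _ ≤ ∑ u ∈ NS, deg w u :=
          Finset.sum_le_sum fun u _ => Finset.sum_le_sum_of_subset (Finset.subset_univ S)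
      _ ≤ NS.card * maxDeg w := by
          simpa using Finset.sum_le_card_nsmul NS _ _ fun u _ => deg_le_maxDeg w u
  have hS' : S.card * ((Fintype.card V - 1) * maxDeg w) ≤
      Fintype.card V * ∑ v ∈ S, deg w v := by
    simpa [Finset.mul_sum] using Finset.card_nsmul_le_sum S _ _ hS
  have hcmp : (Fintype.card V - 1) * S.card ≤ Fintype.card V * NS.card := by
    refine Nat.le_of_mul_le_mul_right ?_ hΔ
    nlinarith
  obtain ⟨m, hm⟩ : ∃ m, Fintype.card V = m + 1 := ⟨_, (Nat.succ_pred_eq_of_pos (by omega)).symm⟩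
  rw [hm] at hcmp hlt
  rw [Nat.add_sub_cancel] at hcmp
  nlinarith

lemma exists_injOn_adj (hsymm : ∀ u v, w u v = w v u) (hloop : ∀ v, w v v = 0)
    (hΔ : 0 < maxDeg w) {X : Finset V} (hX : ∀ x ∈ X, Heavy w x) :
    ∃ f : V → V, Set.InjOn f X ∧ ∀ x ∈ X, (support w).Adj x (f x) := by
  obtain ⟨g, hg, hgX⟩ := (Finset.all_card_le_biUnion_card_iff_exists_injective
    fun x : X => nbrs w x).1 fun s => by
      have h := card_le_card_biUnion_nbrs hsymm hloop hΔ (S := s.image Subtype.val)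
        (by simp only [Finset.mem_image]; rintro _ ⟨x, -, rfl⟩; exact hX x x.2)
      rwa [Finset.image_biUnion, Finset.card_image_of_injective _ Subtype.val_injective] at h
  refine ⟨fun v => if h : v ∈ X then g ⟨v, h⟩ else v, fun x hx y hy hxy => ?_, fun x hx => ?_⟩
  · simp only [Finset.mem_coe] at hx hy
    simp only [dif_pos hx, dif_pos hy] at hxy
    exact congrArg Subtype.val (hg hxy)
  · simpa [hx, nbrs] using hgX ⟨x, hx⟩

lemma exists_saturating_matching (hsymm : ∀ u v, w u v = w v u) (hloop : ∀ v, w v v = 0)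
    (hΔ : 0 < maxDeg w) {X : Finset V} (hX : ∀ x ∈ X, Heavy w x)
    (hbip : BipartiteOn (support w) X) : ∃ N, IsMatching w N ∧ ∀ x ∈ X, Saturates N x :=
  let ⟨_, hf, hadj⟩ := exists_injOn_adj hsymm hloop hΔ hX
  let ⟨N, hN, _, hsat⟩ := exists_matching_of_injOn X hf hadj hbip
  ⟨N, hN, hsat⟩

lemma IsMaxWeightMatching.saturates_of_heavy {M : Finset (Sym2 V)} {φ : V → ℕ}
    (hM : IsMaxWeightMatching w φ M) (hsymm : ∀ u v, w u v = w v u)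
    (hloop : ∀ v, w v v = 0) (hΔ : 0 < maxDeg w) {X : Finset V} (hX : ∀ x ∈ X, Heavy w x)
    (hbip : BipartiteOn (support w) X) {c : ℕ} (hc : ∀ v ∉ X, φ v ≤ c) {i : V} (hi : i ∈ X)
    (hic : c < φ i) : Saturates M i :=
  let ⟨_, hN, hNX⟩ := exists_saturating_matching hsymm hloop hΔ hX hbip
  hM.saturates_of_lt hc hN hNX hi hic

end Saturating

section Weights

variable {V : Type}

lemma Rfun_le_one (M : ℕ → Finset (Sym2 V)) (k : ℕ) (i : V) : Rfun M k i ≤ 1 := by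
  unfold Rfun; split <;> omega

lemma Rfun_eq_zero_iff {M : ℕ → Finset (Sym2 V)} {k : ℕ} {i : V} :
    Rfun M k i = 0 ↔ ¬ Saturates (M k) i := by
  simp [Rfun]

lemma Rfun_of_saturates {M : ℕ → Finset (Sym2 V)} {k : ℕ} {i : V} (h : Saturates (M k) i) :
    Rfun M k i = 1 := by
  simp [Rfun, h]

lemma Ufun_le_one (M : ℕ → Finset (Sym2 V)) (k : ℕ) (i : V) : Ufun M k i ≤ 1 := by
  unfold Ufun
  split_ifs
  · omega
  · exact mul_le_one' (Rfun_le_one M _ i) (Rfun_le_one M _ i)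
  · exact Rfun_le_one M _ i

lemma Ufun_three_mul_add_one (M : ℕ → Finset (Sym2 V)) (m : ℕ) (i : V) :
    Ufun M (3 * m + 1) i = Rfun M (3 * m) i := by
  simp [Ufun, Nat.add_mod]

lemma Ufun_three_mul_add_two (M : ℕ → Finset (Sym2 V)) (m : ℕ) (i : V) :
    Ufun M (3 * m + 2) i = Rfun M (3 * m + 1) i * Rfun M (3 * m) i := by
  simp [Ufun, Nat.add_mod]

variable [Fintype V] {w : V → V → ℕ} {u : V → ℕ} {i : V}

lemma one_le_lcnsbWeight (hu : u i ≤ 1) : 1 ≤ lcnsbWeight w u i := by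
  unfold lcnsbWeight; split_ifs <;> omega

lemma lcnsbWeight_eq_five (hc : Critical w i) (hu : u i = 0) : lcnsbWeight w u i = 5 := by
  simp [lcnsbWeight, hc, hu]

lemma lcnsbWeight_le_four (hu : u i ≤ 1) (h : ¬ (Critical w i ∧ u i = 0)) :
    lcnsbWeight w u i ≤ 4 := by
  unfold lcnsbWeight
  split_ifs with hc
  · have : u i ≠ 0 := fun h0 => h ⟨hc, h0⟩
    omega
  all_goals omega

lemma two_le_lcnsbWeight (hu : u i ≤ 1) (h : Heavy w i) : 2 ≤ lcnsbWeight w u i := by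
  unfold lcnsbWeight; split_ifs <;> omega

lemma lcnsbWeight_eq_one (h : ¬ Heavy w i) : lcnsbWeight w u i = 1 := by
  rw [lcnsbWeight, if_neg fun hc => h hc.heavy, if_neg h]

end Weights

section Removal

variable {V : Type} [Fintype V] [DecidableEq V] {w : V → V → ℕ} {M : Finset (Sym2 V)}

lemma IsMatching.card_partners (hM : IsMatching w M) (v : V) :
    (Finset.univ.filter fun u => s(v, u) ∈ M).card = if Saturates M v then 1 else 0 := by
  split_ifs with h
  · obtain ⟨e, he, hve⟩ := h
    obtain ⟨z, rfl⟩ := Sym2.mem_iff_exists.1 hve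
    refine Finset.card_eq_one.2 ⟨z, Finset.ext fun u => ?_⟩
    simpa using ⟨fun hu => hM.eq_of_mk_mem hu he, fun h => h ▸ he⟩
  · exact Finset.card_eq_zero.2 (Finset.filter_eq_empty_iff.2
      fun u _ hu => h ⟨_, hu, Sym2.mem_mk_left v u⟩)

lemma IsMatching.deg_removeMatching_add (hM : IsMatching w M) (v : V) :
    deg (removeMatching w M) v + (if Saturates M v then 1 else 0) = deg w v := by
  rw [← hM.card_partners v, Finset.card_filter, deg, deg, ← Finset.sum_add_distrib]
  refine Finset.sum_congr rfl fun u _ => ?_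
  unfold removeMatching
  split_ifs with h
  · have := hM.2.1 v u h
    omega
  · rfl

lemma maxDeg_le_of_canEvacuate {T : ℕ} (h : CanEvacuate w T) : maxDeg w ≤ T := by
  obtain ⟨M, hM, hcount⟩ := h
  refine maxDeg_le fun v => ?_
  calc deg w v = ∑ u, ∑ j, if s(v, u) ∈ M j then 1 else 0 := by
        simp only [deg, ← hcount, Finset.card_filter]
    _ = ∑ j, if Saturates (M j) v then 1 else 0 := by
        rw [Finset.sum_comm]
        simp only [← Finset.card_filter, (hM _).card_partners]
    _ ≤ ∑ _j : Fin T, 1 := Finset.sum_le_sum fun j _ => by split_ifs <;> omega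
    _ = T := by simp

end Removal

namespace LCNSBRun

variable {V : Type} [Fintype V] [DecidableEq V] {w0 : V → V → ℕ} (run : LCNSBRun w0)

lemma G_antitone (u v : V) : Antitone fun k => run.G k u v :=
  antitone_nat_of_succ_le fun k => by
    rw [run.step]
    unfold removeMatching
    split_ifs <;> omega

lemma G_symm (hsymm : ∀ u v, w0 u v = w0 v u) (k : ℕ) (u v : V) :
    run.G k u v = run.G k v u := by
  induction k with
  | zero => simpa [run.init] using hsymm u v
  | succ k ih => simp only [run.step, removeMatching, Sym2.eq_swap (a := u), ih]

lemma G_loopless (hloop : ∀ v, w0 v v = 0) (k : ℕ) (v : V) : run.G k v v = 0 := by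
  simpa [run.init, hloop] using run.G_antitone v v (Nat.zero_le k)

lemma support_antitone {k l : ℕ} (hkl : k ≤ l) : support (run.G l) ≤ support (run.G k) :=
  fun u v huv => ⟨huv.1, le_trans huv.2.1 (run.G_antitone u v hkl),
    le_trans huv.2.2 (run.G_antitone v u hkl)⟩

lemma deg_succ_add_Rfun (k : ℕ) (v : V) :
    deg (run.G (k + 1)) v + Rfun run.M k v = deg (run.G k) v := by
  rw [run.step]
  exact (run.matching k).deg_removeMatching_add v

lemma maxDeg_antitone : Antitone fun k => maxDeg (run.G k) :=
  antitone_nat_of_succ_le fun k =>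
    maxDeg_le fun v => by linarith [run.deg_succ_add_Rfun k v, deg_le_maxDeg (run.G k) v]

lemma isMaxWeightMatching (k : ℕ) :
    IsMaxWeightMatching (run.G k) (lcnsbWeight (run.G k) (Ufun run.M k)) (run.M k) :=
  ⟨run.matching k, run.opt k⟩

lemma one_le_weight (k : ℕ) (v : V) : 1 ≤ lcnsbWeight (run.G k) (Ufun run.M k) v :=
  one_le_lcnsbWeight (Ufun_le_one _ _ _)

lemma not_adj_of_not_saturates {k l : ℕ} (hlk : l ≤ k) {x y : V}
    (hx : ¬ Saturates (run.M l) x) (hy : ¬ Saturates (run.M l) y) :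
    ¬ (support (run.G k)).Adj x y := fun hxy =>
  ((run.isMaxWeightMatching l).saturates_or_saturates (run.one_le_weight l)
    (run.support_antitone hlk hxy)).elim hx hy

lemma G_add_sum (k : ℕ) (u v : V) :
    run.G k u v + ∑ j ∈ Finset.range k, (if s(u, v) ∈ run.M j then 1 else 0) = w0 u v := by
  induction k with
  | zero => simp [run.init]
  | succ k ih =>
    rw [Finset.sum_range_succ, ← ih, run.step]
    unfold removeMatching
    split_ifs with h
    · have := (run.matching k).2.1 u v h
      omega
    · omega

lemma canEvacuate {T : ℕ} (h : ∀ u v, run.G T u v = 0) : CanEvacuate w0 T := by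
  refine ⟨fun j => run.M j, fun j => ⟨(run.matching j).1, fun u v huv => ?_,
    (run.matching j).2.2⟩, fun u v => ?_⟩
  · simpa [run.init] using
      ((run.matching j).2.1 u v huv).trans (run.G_antitone u v (Nat.zero_le _))
  · rw [Finset.card_filter,
      Fin.sum_univ_eq_sum_range (fun j => if s(u, v) ∈ run.M j then 1 else 0),
      ← run.G_add_sum T u v, h, zero_add]

lemma bipartiteOn_three_mul_add_one (m : ℕ) :
    BipartiteOn (support (run.G (3 * m + 1))) {x | Ufun run.M (3 * m + 1) x = 0} :=
  ⟨∅, fun x y hx hy hxy => by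
    simp only [Set.mem_ofPred_eq, Ufun_three_mul_add_one, Rfun_eq_zero_iff] at hx hy
    exact absurd hxy (run.not_adj_of_not_saturates (by omega) hx hy)⟩

lemma bipartiteOn_three_mul_add_two (m : ℕ) :
    BipartiteOn (support (run.G (3 * m + 2))) {x | Ufun run.M (3 * m + 2) x = 0} := by
  refine ⟨{x | Saturates (run.M (3 * m)) x}, fun x y hx hy hxy => ?_⟩
  simp only [Set.mem_ofPred_eq, Ufun_three_mul_add_two, mul_eq_zero, Rfun_eq_zero_iff] at hx hy ⊢
  have h₀ := fun hx hy => run.not_adj_of_not_saturates (l := 3 * m) (by omega) hx hy hxy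
  have h₁ := fun hx hy => run.not_adj_of_not_saturates (l := 3 * m + 1) (by omega) hx hy hxy
  tauto

lemma saturates_of_critical (hsymm : ∀ u v, w0 u v = w0 v u) (hloop : ∀ v, w0 v v = 0)
    {k : ℕ} (hΔ : 0 < maxDeg (run.G k))
    (hbip : BipartiteOn (support (run.G k)) {x | Ufun run.M k x = 0}) {v : V}
    (hv : Critical (run.G k) v) (hU : Ufun run.M k v = 0) : Saturates (run.M k) v := by
  refine (run.isMaxWeightMatching k).saturates_of_heavy
    (run.G_symm hsymm k) (run.G_loopless hloop k) hΔ
    (X := Finset.univ.filter fun x => Critical (run.G k) x ∧ Ufun run.M k x = 0) (c := 4)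
    (fun x hx => (Finset.mem_filter.1 hx).2.1.heavy) (hbip.mono le_rfl fun x hx => ?_)
    (fun x hx => lcnsbWeight_le_four (Ufun_le_one _ _ _) (by simpa using hx))
    (by simpa using ⟨hv, hU⟩) (by rw [lcnsbWeight_eq_five hv hU]; norm_num)
  simp only [Finset.coe_filter, Finset.mem_univ, true_and, Set.mem_ofPred_eq] at hx
  exact hx.2

lemma deg_three_mul_add_two_lt (hsymm : ∀ u v, w0 u v = w0 v u) (hloop : ∀ v, w0 v v = 0)
    (m : ℕ) (hΔ : 0 < maxDeg (run.G (3 * m))) (v : V) :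
    deg (run.G (3 * m + 2)) v < maxDeg (run.G (3 * m)) := by
  have h₀ := run.deg_succ_add_Rfun (3 * m) v
  have h₁ : deg (run.G (3 * m + 2)) v + Rfun run.M (3 * m + 1) v = deg (run.G (3 * m + 1)) v :=
    run.deg_succ_add_Rfun (3 * m + 1) v
  have hle := deg_le_maxDeg (run.G (3 * m)) v
  by_cases hv : deg (run.G (3 * m + 1)) v < maxDeg (run.G (3 * m))
  · omega
  have hR : Rfun run.M (3 * m) v = 0 := by omega
  have hΔ₁ : maxDeg (run.G (3 * m + 1)) ≤ maxDeg (run.G (3 * m)) :=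
    run.maxDeg_antitone (Nat.le_succ _)
  have hsat := run.saturates_of_critical hsymm hloop (k := 3 * m + 1) (v := v)
    (lt_of_lt_of_le (by omega) (deg_le_maxDeg _ v))
    (run.bipartiteOn_three_mul_add_one m) (critical_of_maxDeg_le (by omega))
    (by rw [Ufun_three_mul_add_one, hR])
  have := Rfun_of_saturates hsat
  omega

lemma deg_three_mul_add_three_add_two_le (hsymm : ∀ u v, w0 u v = w0 v u)
    (hloop : ∀ v, w0 v v = 0) (m : ℕ) (hΔ : 2 ≤ maxDeg (run.G (3 * m))) (v : V) :
    deg (run.G (3 * m + 3)) v + 2 ≤ maxDeg (run.G (3 * m)) := by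
  have hΔ₂ : maxDeg (run.G (3 * m + 2)) < maxDeg (run.G (3 * m)) := by
    have := maxDeg_le fun v => Nat.le_sub_one_of_lt (run.deg_three_mul_add_two_lt hsymm hloop m
      (by omega) v)
    omega
  have h₀ := run.deg_succ_add_Rfun (3 * m) v
  have h₁ : deg (run.G (3 * m + 2)) v + Rfun run.M (3 * m + 1) v = deg (run.G (3 * m + 1)) v :=
    run.deg_succ_add_Rfun (3 * m + 1) v
  have h₂ : deg (run.G (3 * m + 3)) v + Rfun run.M (3 * m + 2) v = deg (run.G (3 * m + 2)) v :=
    run.deg_succ_add_Rfun (3 * m + 2) v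
  have hle := deg_le_maxDeg (run.G (3 * m)) v
  have hlt := run.deg_three_mul_add_two_lt hsymm hloop m (by omega) v
  by_cases hv : deg (run.G (3 * m + 2)) v + 2 ≤ maxDeg (run.G (3 * m))
  · omega
  have hU : Ufun run.M (3 * m + 2) v = 0 := by
    rw [Ufun_three_mul_add_two]
    exact Nat.mul_eq_zero.2 (by omega)
  have hsat := run.saturates_of_critical hsymm hloop (k := 3 * m + 2) (v := v)
    (lt_of_lt_of_le (by omega) (deg_le_maxDeg _ v))
    (run.bipartiteOn_three_mul_add_two m) (critical_of_maxDeg_le (by omega)) hU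
  have := Rfun_of_saturates hsat
  omega

lemma maxDeg_succ_eq_zero (hsymm : ∀ u v, w0 u v = w0 v u) (hloop : ∀ v, w0 v v = 0)
    {k : ℕ} (h : maxDeg (run.G k) ≤ 1) : maxDeg (run.G (k + 1)) = 0 := by
  refine Nat.le_zero.1 (maxDeg_le fun v => ?_)
  have hstep := run.deg_succ_add_Rfun k v
  have hv := (deg_le_maxDeg (run.G k) v).trans h
  by_contra hpos
  obtain ⟨u, hvu⟩ := exists_adj_of_deg_pos (run.G_symm hsymm k) (run.G_loopless hloop k)
    (by omega : 0 < deg (run.G k) v)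
  have hvs : ¬ Saturates (run.M k) v := by
    rw [← Rfun_eq_zero_iff]
    omega
  -- by maximality the neighbour `u` is served, by an edge `u z` with `z ≠ v`, so `d(u) ≥ 2`
  obtain ⟨e, he, hue⟩ := ((run.isMaxWeightMatching k).saturates_or_saturates
    (run.one_le_weight k) hvu).resolve_left hvs
  obtain ⟨z, rfl⟩ := Sym2.mem_iff_exists.1 hue
  have hvz : v ≠ z := by
    rintro rfl
    exact hvs ⟨_, he, Sym2.mem_mk_right u v⟩
  have := add_le_deg (run.G k) (u := u) hvz
  linarith [(run.matching k).2.1 u z he, hvu.2.2, deg_le_maxDeg (run.G k) u]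

lemma maxDeg_three_mul_add_three_le (hsymm : ∀ u v, w0 u v = w0 v u)
    (hloop : ∀ v, w0 v v = 0) (m : ℕ) :
    maxDeg (run.G (3 * m + 3)) ≤ maxDeg (run.G (3 * m)) - 2 := by
  by_cases hΔ : 2 ≤ maxDeg (run.G (3 * m))
  · exact maxDeg_le fun v => by
      have := run.deg_three_mul_add_three_add_two_le hsymm hloop m hΔ v
      omega
  · have h₁ := run.maxDeg_succ_eq_zero hsymm hloop (k := 3 * m) (by omega)
    have h₃ : maxDeg (run.G (3 * m + 3)) ≤ maxDeg (run.G (3 * m + 1)) :=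
      run.maxDeg_antitone (by omega)
    omega

lemma maxDeg_three_mul_le (hsymm : ∀ u v, w0 u v = w0 v u) (hloop : ∀ v, w0 v v = 0)
    (m : ℕ) : maxDeg (run.G (3 * m)) ≤ maxDeg w0 - 2 * m := by
  induction m with
  | zero => simp [run.init]
  | succ m ih =>
    have := run.maxDeg_three_mul_add_three_le hsymm hloop m
    rw [show 3 * (m + 1) = 3 * m + 3 by ring]
    omega

lemma exists_maxDeg_eq_zero (hsymm : ∀ u v, w0 u v = w0 v u) (hloop : ∀ v, w0 v v = 0) :
    ∃ T, maxDeg (run.G T) = 0 ∧ 2 * T ≤ 3 * maxDeg w0 := by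
  have := run.maxDeg_three_mul_le hsymm hloop
  obtain ⟨q, hq | hq⟩ := Nat.even_or_odd' (maxDeg w0)
  · exact ⟨3 * q, by have := this q; omega, by omega⟩
  · exact ⟨3 * q + 1, run.maxDeg_succ_eq_zero hsymm hloop (by have := this q; omega), by omega⟩

lemma saturates_of_heavy (hsymm : ∀ u v, w0 u v = w0 v u) (hloop : ∀ v, w0 v v = 0)
    (hbip : BipartiteOn (support w0) Set.univ) {k : ℕ} (hΔ : 0 < maxDeg (run.G k)) {v : V}
    (hv : Heavy (run.G k) v) : Saturates (run.M k) v :=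
  (run.isMaxWeightMatching k).saturates_of_heavy (run.G_symm hsymm k)
    (run.G_loopless hloop k) hΔ (X := Finset.univ.filter (Heavy (run.G k))) (c := 1)
    (by simp) (hbip.mono (by simpa [run.init] using run.support_antitone (Nat.zero_le k))
      (Set.subset_univ _))
    (fun x hx => (lcnsbWeight_eq_one (by simpa using hx)).le) (by simpa using hv)
    (two_le_lcnsbWeight (Ufun_le_one _ _ _) hv)

lemma maxDeg_succ_le_of_bipartite (hsymm : ∀ u v, w0 u v = w0 v u) (hloop : ∀ v, w0 v v = 0)
    (hbip : BipartiteOn (support w0) Set.univ) (k : ℕ) :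
    maxDeg (run.G (k + 1)) ≤ maxDeg (run.G k) - 1 := by
  refine maxDeg_le fun v => ?_
  have hstep := run.deg_succ_add_Rfun k v
  have hle := deg_le_maxDeg (run.G k) v
  by_cases hv : deg (run.G k) v < maxDeg (run.G k) ∨ maxDeg (run.G k) = 0
  · omega
  have hsat := run.saturates_of_heavy hsymm hloop hbip (k := k) (v := v) (by omega)
    (critical_of_maxDeg_le (by omega)).heavy
  have := Rfun_of_saturates hsat
  omega

lemma maxDeg_le_of_bipartite (hsymm : ∀ u v, w0 u v = w0 v u) (hloop : ∀ v, w0 v v = 0)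
    (hbip : BipartiteOn (support w0) Set.univ) (k : ℕ) : maxDeg (run.G k) ≤ maxDeg w0 - k := by
  induction k with
  | zero => simp [run.init]
  | succ k ih =>
    have := run.maxDeg_succ_le_of_bipartite hsymm hloop hbip k
    omega

end LCNSBRun

theorem lcnsb_evacuation_time_general {V : Type} [Fintype V] [DecidableEq V]
    (w0 : V → V → ℕ) (hsymm : ∀ u v, w0 u v = w0 v u) (hloop : ∀ v, w0 v v = 0)
    (run : LCNSBRun w0)
    (X' : ℕ) (hX' : IsLeast {T' | CanEvacuate w0 T'} X') :
    (∃ T : ℕ, IsLeast {k | ∀ u v : V, run.G k u v = 0} T ∧ 2 * T ≤ 3 * X') ∧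
    (BipartiteOn (support w0) Set.univ →
      IsLeast {k | ∀ u v : V, run.G k u v = 0} (maxDeg w0) ∧ maxDeg w0 = X') := by
  have hΔX' : maxDeg w0 ≤ X' := maxDeg_le_of_canEvacuate hX'.1
  have hX'le : ∀ k, (∀ u v, run.G k u v = 0) → X' ≤ k := fun k hk => hX'.2 (run.canEvacuate hk)
  refine ⟨?_, fun hbip => ?_⟩
  · obtain ⟨T₀, hT₀, hT₀le⟩ := run.exists_maxDeg_eq_zero hsymm hloop
    have hE : ∃ k, ∀ u v, run.G k u v = 0 := ⟨T₀, eq_zero_of_maxDeg_eq_zero hT₀⟩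
    have hfind := Nat.find_min' hE (eq_zero_of_maxDeg_eq_zero hT₀)
    exact ⟨Nat.find hE, ⟨Nat.find_spec hE, fun k hk => Nat.find_min' hE hk⟩, by omega⟩
  · have hT : ∀ u v, run.G (maxDeg w0) u v = 0 := eq_zero_of_maxDeg_eq_zero
      (by simpa using run.maxDeg_le_of_bipartite hsymm hloop hbip (maxDeg w0))
    exact ⟨⟨hT, fun k hk => hΔX'.trans (hX'le k hk)⟩, le_antisymm hΔX' (hX'le _ hT)⟩

/-- Every LC-NSB evacuation run terminates with `2·T ≤ 3·X′`; moreover, if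
the support of `G(0)` is bipartite then `T = Δ(0) = X′`. -/
theorem lcnsb_evacuation_time {V : Type} [Fintype V] [DecidableEq V]
    (w0 : V → V → ℕ) (hsymm : ∀ u v, w0 u v = w0 v u) (hloop : ∀ v, w0 v v = 0)
    (hn : 2 ≤ Fintype.card V)
    (run : LCNSBRun w0)
    (X' : ℕ) (hX' : IsLeast {T' | CanEvacuate w0 T'} X') :
    (∃ T : ℕ, IsLeast {k | ∀ u v : V, run.G k u v = 0} T ∧ 2 * T ≤ 3 * X') ∧
    (BipartiteOn (support w0) Set.univ →
      IsLeast {k | ∀ u v : V, run.G k u v = 0} (maxDeg w0) ∧ maxDeg w0 = X') :=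
  lcnsb_evacuation_time_general w0 hsymm hloop run X' hX'

end NSBPaper
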